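/- Let S be a finite quantum stop time. For every t ∈ (0,∞] there exists an orthogonal projection E_{S,t} ∈ B(F) such that E_{S,t} ε(f) = ∫_{[0,t]} S(ds) ε(f|_{[0,s)}) ⊗ ε(0|_{[s,∞)}) for all f ∈ L²([0,∞); k). Furthermore, E_{S,s} E_{S,t} = E_{S, s∧t} = E_{S,t} E_{S,s} and S([0,s]) E_{S,∞} = E_{S,s} for all s, t ∈ (0,∞]. -/

import Mathlib

/- ------------------------------------------------------------------
Common framework: an abstract axiomatisation of Boson Fock space
`𝓕 = Γ(L²([0,∞); k))` over `H = L²([0,∞); k)`, quantum stop times,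
stop-time integrals (as limits of Riemann sums over the net of finite
partitions of `[0, t] ⊆ [0, ∞]` ordered by refinement), the CCR flow,
and operator cocycles, following Belton–Sinha,
"Stopping the CCR flow and its isometric cocycles".
------------------------------------------------------------------ -/

open Filter MeasureTheory Topology
open scoped ENNReal

noncomputable section

local notation "⟪" x ", " y "⟫" => @inner ℂ _ _ x y

/-- A finite partition `{0 = π₀ < π₁ < ⋯ < π_{n+1} = t}` of `[0, t] ⊆ [0, ∞]`,
encoded as a finite set of points of `[0, ∞]` containing `0` and `t` and
contained in `[0, t]`. -/
structure StopPartition (t : ℝ≥0∞) where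
  pts : Finset ℝ≥0∞
  zero_mem : 0 ∈ pts
  top_mem : t ∈ pts
  mem_le : ∀ s ∈ pts, s ≤ t

namespace StopPartition

variable {t : ℝ≥0∞}

/-- Partitions are (pre)ordered by refinement: `π ≤ π'` iff `π'` refines `π`. -/
instance : Preorder (StopPartition t) where
  le π π' := π.pts ⊆ π'.pts
  le_refl _ := Finset.Subset.refl _
  le_trans _ _ _ h h' := Finset.Subset.trans h h'

/-- The predecessor of `s` in the partition `π`: the largest partition point
strictly less than `s` (and `0` if there is none). -/
def pred (π : StopPartition t) (s : ℝ≥0∞) : ℝ≥0∞ :=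
  (π.pts.filter fun u => u < s).sup id

end StopPartition

variable {H 𝓕 : Type*}
  [NormedAddCommGroup H] [InnerProductSpace ℂ H] [CompleteSpace H]
  [NormedAddCommGroup 𝓕] [InnerProductSpace ℂ 𝓕] [CompleteSpace 𝓕]

/-- An abstract presentation of Boson Fock space `𝓕 ≅ Γ(H)` over
`H = L²([0,∞); k)`, together with the structure maps needed here:
exponential vectors, truncation `f ↦ f·1_{[0,t)}`, the right shifts `θ_t`
and their adjoints, second quantisations `Γ_t` (with `Γ_∞` the projection
onto `ℂε(0)`, i.e. the second quantisation of `θ_∞ = 0`), and for each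
`f ∈ H`, `s ∈ [0,∞]` the "past insertion" operator
`past f s = |ε(f1_{[0,s)})⟩⟨ε(0)| ⊗ I_{[s}` on `𝓕 ≅ 𝓕_{s)} ⊗ 𝓕_{[s}`, which
maps a future-adapted vector `ε(0|_{[0,s)}) ⊗ x` to `ε(f|_{[0,s)}) ⊗ x`. -/
structure FockSpec (H 𝓕 : Type*) [NormedAddCommGroup H] [InnerProductSpace ℂ H]
    [CompleteSpace H] [NormedAddCommGroup 𝓕] [InnerProductSpace ℂ 𝓕] [CompleteSpace 𝓕] where
  /-- the exponential vectors -/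
  eV : H → 𝓕
  inner_eV : ∀ f g : H, ⟪eV f, eV g⟫ = Complex.exp ⟪f, g⟫
  dense_eV : Dense (Submodule.span ℂ (Set.range eV) : Set 𝓕)
  /-- `cut t` is multiplication by the indicator of `[0, t)`, `f ↦ f|_{[0,t)}` -/
  cut : ℝ≥0∞ → H →L[ℂ] H
  cut_zero : cut 0 = 0
  cut_top : cut ⊤ = ContinuousLinearMap.id ℂ H
  cut_sa : ∀ (t : ℝ≥0∞) (f g : H), ⟪cut t f, g⟫ = ⟪f, cut t g⟫
  cut_min : ∀ (s u : ℝ≥0∞) (f : H), cut s (cut u f) = cut (min s u) f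
  /-- the isometric right shift `θ_t`, with `θ_∞ = 0` -/
  shift : ℝ≥0∞ → H →L[ℂ] H
  shift_top : shift ⊤ = 0
  shift_inner : ∀ t : ℝ≥0∞, t ≠ ⊤ → ∀ f g : H, ⟪shift t f, shift t g⟫ = ⟪f, g⟫
  shift_add : ∀ (s u : ℝ≥0∞) (f : H), shift s (shift u f) = shift (s + u) f
  cut_shift : ∀ (t : ℝ≥0∞) (f : H), cut t (shift t f) = 0
  /-- `shiftL t = θ_t^*`, i.e. `f ↦ f(· + t)` -/
  shiftL : ℝ≥0∞ → H →L[ℂ] H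
  shiftL_adj : ∀ (t : ℝ≥0∞) (f g : H), ⟪shift t f, g⟫ = ⟪f, shiftL t g⟫
  /-- the second quantisation `Γ_t : ε(f) ↦ ε(θ_t f)`;  `Γ_∞` is the orthogonal
  projection onto `ℂ ε(0)` -/
  Gam : ℝ≥0∞ → 𝓕 →L[ℂ] 𝓕
  Gam_eV : ∀ (t : ℝ≥0∞) (f : H), Gam t (eV f) = eV (shift t f)
  /-- `GamL t = Γ_t^*` -/
  GamL : ℝ≥0∞ → 𝓕 →L[ℂ] 𝓕
  GamL_eV : ∀ t : ℝ≥0∞, t ≠ ⊤ → ∀ f : H, GamL t (eV f) = eV (shiftL t f)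
  GamL_adj : ∀ (t : ℝ≥0∞) (x y : 𝓕), ⟪Gam t x, y⟫ = ⟪x, GamL t y⟫
  /-- past insertion: on `𝓕 ≅ 𝓕_{s)} ⊗ 𝓕_{[s}`,
  `past f s = |ε(f|_{[0,s)})⟩⟨ε(0|_{[0,s)})| ⊗ I_{[s}`; it maps `ε(0|_{[0,s)}) ⊗ x`
  to `ε(f|_{[0,s)}) ⊗ x` -/
  past : H → ℝ≥0∞ → 𝓕 →L[ℂ] 𝓕
  past_eV : ∀ (f : H) (s : ℝ≥0∞) (g : H), past f s (eV g) = eV (cut s f + g - cut s g)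
  /-- `projE t = E_t`, the second quantisation of `cut t`: the orthogonal projection
  onto `𝓕_{t)} ⊗ ε(0|_{[t,∞)})` -/
  projE : ℝ≥0∞ → 𝓕 →L[ℂ] 𝓕
  projE_eV : ∀ (t : ℝ≥0∞) (f : H), projE t (eV f) = eV (cut t f)

namespace FockSpec

variable (E : FockSpec H 𝓕)

/-- `X ∈ B(𝓕_{t)}) ⊗ I_{[t}`, expressed through the factorisation of matrix
elements between exponential vectors. -/
def AdaptedAt (X : 𝓕 →L[ℂ] 𝓕) (t : ℝ≥0∞) : Prop :=
  ∀ f g : H, ⟪E.eV f, X (E.eV g)⟫ =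
    ⟪E.eV (E.cut t f), X (E.eV (E.cut t g))⟫ * Complex.exp ⟪f - E.cut t f, g - E.cut t g⟫

/-- `F : [0, t] → 𝓕` is future adapted: `F(s) = ε(0|_{[0,s)}) ⊗ F_s ∈
ε(0|_{[0,s)}) ⊗ 𝓕_{[s}` for all `s ∈ (0, t]` (the value at `s = ∞`, when `t = ∞`,
being fixed by the same requirement). -/
def FutureAdapted (t : ℝ≥0∞) (F : ℝ≥0∞ → 𝓕) : Prop :=
  ∀ s : ℝ≥0∞, 0 < s → s ≤ t → E.past 0 s (F s) = F s

end FockSpec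

/-- `F` is bounded on `[0, t]`. -/
def BddOn {𝓕 : Type*} [NormedAddCommGroup 𝓕] (t : ℝ≥0∞) (F : ℝ≥0∞ → 𝓕) : Prop :=
  ∃ C : ℝ, ∀ s ≤ t, ‖F s‖ ≤ C

/-- A quantum stop time: a spectral measure on the Borel sets of `[0, ∞]`,
with values orthogonal projections on `𝓕`, which is identity adapted; we impose
throughout (as in the paper) that `S({0}) = 0`. -/
structure QST (E : FockSpec H 𝓕) where
  meas : Set ℝ≥0∞ → 𝓕 →L[ℂ] 𝓕
  sa : ∀ A : Set ℝ≥0∞, IsSelfAdjoint (meas A)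
  idem : ∀ A : Set ℝ≥0∞, meas A ∘L meas A = meas A
  /-- condition (ii): `A ↦ ⟨x, S(A) y⟩` is a complex measure -/
  cm : 𝓕 → 𝓕 → MeasureTheory.ComplexMeasure ℝ≥0∞
  cm_apply : ∀ (x y : 𝓕) (A : Set ℝ≥0∞), MeasurableSet A → cm x y A = ⟪x, meas A y⟫
  total : meas Set.univ = 1
  adapted : ∀ t : ℝ≥0∞, t ≠ ⊤ → E.AdaptedAt (meas {s | s ≤ t}) t
  zero : meas {0} = 0

namespace QST

variable {E : FockSpec H 𝓕}

/-- A quantum stop time is finite when `S({∞}) = 0`. -/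
def Finite (S : QST E) : Prop := S.meas {⊤} = 0

/-- The Riemann sum `Σ_{j=1}^{n+1} S((π_{j-1}, π_j]) v(π_j)` associated with a
partition `π` of `[0, t]` and an integrand `v`. -/
def sum (S : QST E) {t : ℝ≥0∞} (v : ℝ≥0∞ → 𝓕) (π : StopPartition t) : 𝓕 :=
  ∑ s ∈ π.pts.erase 0, S.meas (Set.Ioc (π.pred s) s) (v s)

end QST

variable {E : FockSpec H 𝓕}

/-- The integral of a complex function against a complex measure, via the Jordan
decompositions of its real and imaginary parts. -/
def cintegral (μ : MeasureTheory.ComplexMeasure ℝ≥0∞) (φ : ℝ≥0∞ → ℂ) : ℂ :=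
  ((∫ s, φ s ∂(MeasureTheory.ComplexMeasure.re μ).toJordanDecomposition.posPart) -
      ∫ s, φ s ∂(MeasureTheory.ComplexMeasure.re μ).toJordanDecomposition.negPart) +
    Complex.I * ((∫ s, φ s ∂(MeasureTheory.ComplexMeasure.im μ).toJordanDecomposition.posPart) -
      ∫ s, φ s ∂(MeasureTheory.ComplexMeasure.im μ).toJordanDecomposition.negPart)

/-- `∫_{[0,t]} φ(s) S^{f,g}(ds)`, where `S^{f,g}` is the finite Borel measure on
`[0, ∞]` with `S^{f,g}(A) = ∫_A exp(-∫_s^∞ ⟨f(r), g(r)⟩ dr) ⟨ε(f), S(ds) ε(g)⟩`;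
here `∫_s^∞ ⟨f(r), g(r)⟩ dr = ⟪f - f|_{[0,s)}, g - g|_{[0,s)}⟫`. -/
def QST.sfgIntegral (S : QST E) (f g : H) (t : ℝ≥0∞) (φ : ℝ≥0∞ → ℂ) : ℂ :=
  cintegral (S.cm (E.eV f) (E.eV g))
    (Set.indicator {s | s ≤ t}
      fun s => φ s * Complex.exp (-⟪f - E.cut s f, g - E.cut s g⟫))

/-- `ESt` is the family `(E_{S,t})_{t ∈ (0,∞]}` of time projections of `S`:
each `E_{S,t}` is an orthogonal projection and
`E_{S,t} ε(f) = ∫_{[0,t]} S(ds) ε(f|_{[0,s)}) ⊗ ε(0|_{[s,∞)})`. -/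
def IsTimeProj (S : QST E) (ESt : ℝ≥0∞ → 𝓕 →L[ℂ] 𝓕) : Prop :=
  ∀ t : ℝ≥0∞, 0 < t →
    IsSelfAdjoint (ESt t) ∧ ESt t ∘L ESt t = ESt t ∧
      ∀ f : H,
        Tendsto (fun π : StopPartition t => S.sum (fun s => E.past f s (E.eV 0)) π) atTop
          (𝓝 (ESt t (E.eV f)))

/-- `ΓS` is the stopped right shift of `S`:
`Γ_S x = ∫_{[0,∞]} S(ds) ε(0|_{[0,s)}) ⊗ Γ_s x`. -/
def IsStoppedShift (S : QST E) (ΓS : 𝓕 →L[ℂ] 𝓕) : Prop :=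
  ∀ x : 𝓕, Tendsto (fun π : StopPartition ⊤ => S.sum (fun s => E.Gam s x) π) atTop (𝓝 (ΓS x))

/-- `j` encodes the isometric isomorphism `j_S : 𝓕_{S)} ⊗ 𝓕_{[S} → 𝓕` of the
abstract strong Markov property, as a bilinear map on `𝓕 × 𝓕` (precomposed with
`E_S = E_{S,∞}` and `Γ_S` in the two arguments): it satisfies
`j_S(E_{S,t} ε(f) ⊗ Γ_S x) = ∫_{[0,t]} S(ds) ε(f|_{[0,s)}) ⊗ Γ_s x`, is isometric
for the tensor inner product, and has dense (hence, being isometric, full) range. -/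
def IsJS (S : QST E) (ESt : ℝ≥0∞ → 𝓕 →L[ℂ] 𝓕) (ΓS : 𝓕 →L[ℂ] 𝓕)
    (j : 𝓕 →ₗ[ℂ] 𝓕 →ₗ[ℂ] 𝓕) : Prop :=
  (∀ t : ℝ≥0∞, 0 < t → ∀ (f : H) (x : 𝓕),
      Tendsto (fun π : StopPartition t => S.sum (fun s => E.past f s (E.Gam s x)) π) atTop
        (𝓝 (j (ESt t (E.eV f)) (ΓS x)))) ∧
    (∀ a b x y : 𝓕,
      ⟪j (ESt ⊤ a) (ΓS x), j (ESt ⊤ b) (ΓS y)⟫ = ⟪ESt ⊤ a, ESt ⊤ b⟫ * ⟪ΓS x, ΓS y⟫) ∧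
    Dense (Submodule.span ℂ {z : 𝓕 | ∃ a x : 𝓕, z = j (ESt ⊤ a) (ΓS x)} : Set 𝓕)

/-- A spectral measure on the Borel sets of `[0, ∞]²`. -/
def IsSpectralProd (P : Set (ℝ≥0∞ × ℝ≥0∞) → 𝓕 →L[ℂ] 𝓕) : Prop :=
  (∀ A, IsSelfAdjoint (P A)) ∧ (∀ A, P A ∘L P A = P A) ∧ P Set.univ = 1 ∧
    ∀ A : ℕ → Set (ℝ≥0∞ × ℝ≥0∞), (∀ n, MeasurableSet (A n)) →
      Pairwise (Function.onFun Disjoint A) → ∀ x y : 𝓕,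
        HasSum (fun n => ⟪x, P (A n) y⟫) ⟪x, P (⋃ n, A n) y⟫

/-- `P` is the product spectral measure `S ⊗ T` on `[0, ∞]²`, determined on
rectangles by `(S ⊗ T)(A × B) = j_S (S(A) ⊗ Γ_S T(B) Γ_S^*) j_S^*`. -/
def IsProdOf (S T : QST E) (ESt : ℝ≥0∞ → 𝓕 →L[ℂ] 𝓕) (ΓS : 𝓕 →L[ℂ] 𝓕)
    (jS : 𝓕 →ₗ[ℂ] 𝓕 →ₗ[ℂ] 𝓕) (P : Set (ℝ≥0∞ × ℝ≥0∞) → 𝓕 →L[ℂ] 𝓕) : Prop :=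
  IsSpectralProd P ∧
    ∀ A B : Set ℝ≥0∞, MeasurableSet A → MeasurableSet B → ∀ a y : 𝓕,
      P (A ×ˢ B) (jS (ESt ⊤ a) (ΓS y)) = jS (S.meas A (ESt ⊤ a)) (ΓS (T.meas B y))

/-- `ST` is the convolution `S ⋆ T`:
`(S ⋆ T)(C) = (S ⊗ T)({(s, u) : s + u ∈ C})`. -/
def IsConvOf (S T : QST E) (ESt : ℝ≥0∞ → 𝓕 →L[ℂ] 𝓕) (ΓS : 𝓕 →L[ℂ] 𝓕)
    (jS : 𝓕 →ₗ[ℂ] 𝓕 →ₗ[ℂ] 𝓕) (ST : QST E) : Prop :=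
  ∃ P : Set (ℝ≥0∞ × ℝ≥0∞) → 𝓕 →L[ℂ] 𝓕, IsProdOf S T ESt ΓS jS P ∧
    ∀ C : Set ℝ≥0∞, MeasurableSet C → ST.meas C = P {p | p.1 + p.2 ∈ C}

/-- A Borel measurable, bounded, future-adapted integrand on `[0, t]`. -/
def MeasIntegrand [MeasurableSpace 𝓕] (E : FockSpec H 𝓕) (t : ℝ≥0∞)
    (F : ℝ≥0∞ → 𝓕) : Prop :=
  Measurable F ∧ BddOn t F ∧ E.FutureAdapted t F

/-- `Int` is a stop-time integral for `S`: `Int t f F` plays the role of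
`∫_{[0,t]} S(ds) ε(f|_{[0,s)}) ⊗ F_s` for Borel measurable, bounded,
future-adapted `F`, satisfying the inner-product and projection identities and
extending the Riemann-sum limit for continuous integrands. -/
def IsStopIntegral [MeasurableSpace 𝓕] (E : FockSpec H 𝓕) (S : QST E)
    (Int : ℝ≥0∞ → H → (ℝ≥0∞ → 𝓕) → 𝓕) : Prop :=
  (∀ (t : ℝ≥0∞) (f g : H) (F G : ℝ≥0∞ → 𝓕), MeasIntegrand E t F → MeasIntegrand E t G →
      ⟪Int t f F, Int t g G⟫ = S.sfgIntegral f g t fun s => ⟪F s, G s⟫) ∧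
    (∀ (t : ℝ≥0∞) (f : H) (F : ℝ≥0∞ → 𝓕), MeasIntegrand E t F → ∀ r : ℝ≥0∞, 0 < r →
      S.meas {s | s ≤ r} (Int t f F) = Int (min r t) f F) ∧
    (∀ (t : ℝ≥0∞) (f : H) (F : ℝ≥0∞ → 𝓕), MeasIntegrand E t F →
      ContinuousOn F {s | s ≤ t} →
        Tendsto (fun π : StopPartition t => S.sum (fun s => E.past f s (F s)) π) atTop
          (𝓝 (Int t f F)))

/-- `σ` is the CCR flow: `σ_t(X) = I_{t)} ⊗ Γ_t X Γ_t^*` for `t ∈ [0, ∞)`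
(expressed through matrix elements between exponential vectors), and `σ_∞ ≡ I`. -/
def IsCCRFlow (E : FockSpec H 𝓕) (σ : ℝ≥0∞ → (𝓕 →L[ℂ] 𝓕) → 𝓕 →L[ℂ] 𝓕) : Prop :=
  (∀ s : ℝ≥0∞, s ≠ ⊤ → ∀ (X : 𝓕 →L[ℂ] 𝓕) (f g : H),
      ⟪E.eV f, σ s X (E.eV g)⟫ =
        Complex.exp ⟪E.cut s f, E.cut s g⟫ *
          ⟪E.eV (E.shiftL s f), X (E.eV (E.shiftL s g))⟫) ∧
    ∀ X : 𝓕 →L[ℂ] 𝓕, σ ⊤ X = 1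

/-- The Riemann sum `σ_{S,π}(X) = Σ_{j=1}^{n+1} σ_{π_j}(X) S((π_{j-1}, π_j])`. -/
def QST.flowSum (S : QST E) (σ : ℝ≥0∞ → (𝓕 →L[ℂ] 𝓕) → 𝓕 →L[ℂ] 𝓕)
    (X : 𝓕 →L[ℂ] 𝓕) (π : StopPartition (⊤ : ℝ≥0∞)) : 𝓕 →L[ℂ] 𝓕 :=
  ∑ s ∈ π.pts.erase 0, σ s X ∘L S.meas (Set.Ioc (π.pred s) s)

/-- `σS` is the stopped CCR flow `σ_S`: for every `X`, `σ_S(X)` is the limit of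
`σ_{S,π}(X)` in the strong operator topology as `π` is refined. -/
def IsStoppedFlow (S : QST E) (σ : ℝ≥0∞ → (𝓕 →L[ℂ] 𝓕) → 𝓕 →L[ℂ] 𝓕)
    (σS : (𝓕 →L[ℂ] 𝓕) → 𝓕 →L[ℂ] 𝓕) : Prop :=
  ∀ (X : 𝓕 →L[ℂ] 𝓕) (x : 𝓕),
    Tendsto (fun π : StopPartition ⊤ => S.flowSum σ X π x) atTop (𝓝 (σS X x))

variable {h 𝓚 : Type*}
  [NormedAddCommGroup h] [InnerProductSpace ℂ h] [CompleteSpace h]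
  [NormedAddCommGroup 𝓚] [InnerProductSpace ℂ 𝓚] [CompleteSpace 𝓚]

/-- An abstract presentation of the Hilbert-space tensor product `𝓚 = h ⊗ 𝓕` of
the initial space `h` and Fock space `𝓕`, with the ampliations
`X ↦ I_h ⊗ X` of `B(𝓕)` and `B ↦ B ⊗ I_𝓕` of `B(h)`. -/
structure AmpSpec (𝓕 h 𝓚 : Type*) [NormedAddCommGroup 𝓕] [InnerProductSpace ℂ 𝓕]
    [CompleteSpace 𝓕] [NormedAddCommGroup h] [InnerProductSpace ℂ h] [CompleteSpace h]
    [NormedAddCommGroup 𝓚] [InnerProductSpace ℂ 𝓚] [CompleteSpace 𝓚] where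
  tens : h →ₗ[ℂ] 𝓕 →ₗ[ℂ] 𝓚
  inner_tens : ∀ (u v : h) (x y : 𝓕), ⟪tens u x, tens v y⟫ = ⟪u, v⟫ * ⟪x, y⟫
  dense_tens : Dense (Submodule.span ℂ {z : 𝓚 | ∃ u x, z = tens u x} : Set 𝓚)
  amp : (𝓕 →L[ℂ] 𝓕) → 𝓚 →L[ℂ] 𝓚
  amp_tens : ∀ (X : 𝓕 →L[ℂ] 𝓕) (u : h) (x : 𝓕), amp X (tens u x) = tens u (X x)
  ampH : (h →L[ℂ] h) → 𝓚 →L[ℂ] 𝓚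
  ampH_tens : ∀ (B : h →L[ℂ] h) (u : h) (x : 𝓕), ampH B (tens u x) = tens (B u) x

/-- `X ∈ M ⊗̄ B(𝓕)` for the von Neumann algebra `M ⊆ B(h)`: `X` commutes with
`B ⊗ I_𝓕` for every `B` in the commutant of `M`. -/
def InVNTensor (A : AmpSpec 𝓕 h 𝓚) (M : Set (h →L[ℂ] h)) (X : 𝓚 →L[ℂ] 𝓚) : Prop :=
  ∀ B : h →L[ℂ] h, (∀ Y ∈ M, B ∘L Y = Y ∘L B) → X ∘L A.ampH B = A.ampH B ∘L X

/-- `V` is a `p`-adapted process: `V_t = V_{t)} ⊗ P_{[t}`, where `P_{[t}` is the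
second quantisation of the pointwise action `pH` of the projection `p` on
`L²([t,∞); k)`; expressed through matrix elements between exponential vectors. -/
def PAdapted (E : FockSpec H 𝓕) (A : AmpSpec 𝓕 h 𝓚) (pH : H →L[ℂ] H)
    (V : ℝ≥0∞ → 𝓚 →L[ℂ] 𝓚) : Prop :=
  ∀ t : ℝ≥0∞, t ≠ ⊤ → ∀ (u v : h) (f g : H),
    ⟪A.tens u (E.eV f), V t (A.tens v (E.eV g))⟫ =
      ⟪A.tens u (E.eV (E.cut t f)), V t (A.tens v (E.eV (E.cut t g)))⟫ *
        Complex.exp ⟪f - E.cut t f, pH (g - E.cut t g)⟫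

/-- `Vhat` is the identity-adapted projection `V̂` of the `p`-adapted process `V`:
`V̂_t = V_{t)} ⊗ I_{[t}`. -/
def IsHatOf (E : FockSpec H 𝓕) (A : AmpSpec 𝓕 h 𝓚)
    (V Vhat : ℝ≥0∞ → 𝓚 →L[ℂ] 𝓚) : Prop :=
  ∀ t : ℝ≥0∞, t ≠ ⊤ → ∀ (u v : h) (f g : H),
    ⟪A.tens u (E.eV f), Vhat t (A.tens v (E.eV g))⟫ =
      ⟪A.tens u (E.eV (E.cut t f)), V t (A.tens v (E.eV (E.cut t g)))⟫ *
        Complex.exp ⟪f - E.cut t f, g - E.cut t g⟫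

/-- The process is isometric: `V_{t)}^* V_{t)} = I`, i.e. `V̂_t` is isometric. -/
def IsometricHat (Vhat : ℝ≥0∞ → 𝓚 →L[ℂ] 𝓚) : Prop :=
  ∀ t : ℝ≥0∞, t ≠ ⊤ → ∀ z : 𝓚, ‖Vhat t z‖ = ‖z‖

/-- `Sig` is the CCR flow extended by ampliation to `B(h ⊗ 𝓕)`. -/
def IsAmpCCRFlow (E : FockSpec H 𝓕) (A : AmpSpec 𝓕 h 𝓚)
    (Sig : ℝ≥0∞ → (𝓚 →L[ℂ] 𝓚) → 𝓚 →L[ℂ] 𝓚) : Prop :=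
  ∀ s : ℝ≥0∞, s ≠ ⊤ → ∀ (X : 𝓚 →L[ℂ] 𝓚) (u v : h) (f g : H),
    ⟪A.tens u (E.eV f), Sig s X (A.tens v (E.eV g))⟫ =
      Complex.exp ⟪E.cut s f, E.cut s g⟫ *
        ⟪A.tens u (E.eV (E.shiftL s f)), X (A.tens v (E.eV (E.shiftL s g)))⟫

/-- The (left operator Markovian) cocycle identity `V_{s+t} = V̂_s σ_s(V_t)`. -/
def IsLeftCocycle (Sig : ℝ≥0∞ → (𝓚 →L[ℂ] 𝓚) → 𝓚 →L[ℂ] 𝓚)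
    (V Vhat : ℝ≥0∞ → 𝓚 →L[ℂ] 𝓚) : Prop :=
  ∀ s t : ℝ≥0∞, s ≠ ⊤ → t ≠ ⊤ → V (s + t) = Vhat s ∘L Sig s (V t)

/-- Strong continuity of the process on `[0, ∞)`. -/
def StrongContOn (V : ℝ≥0∞ → 𝓚 →L[ℂ] 𝓚) : Prop :=
  ∀ z : 𝓚, ContinuousOn (fun t => V t z) {t : ℝ≥0∞ | t ≠ ⊤}

/-- The Riemann sum `V_{S,π} = Σ_{j=1}^{n+1} V_{π_j} S((π_{j-1}, π_j])`, with the
stop time `S` extended by ampliation to `h ⊗ 𝓕`. -/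
def VSum {E : FockSpec H 𝓕} (A : AmpSpec 𝓕 h 𝓚) (S : QST E) {t : ℝ≥0∞}
    (V : ℝ≥0∞ → 𝓚 →L[ℂ] 𝓚) (π : StopPartition t) : 𝓚 →L[ℂ] 𝓚 :=
  ∑ s ∈ π.pts.erase 0, V s ∘L A.amp (S.meas (Set.Ioc (π.pred s) s))

/-! The Riemann sum `∑ⱼ S((πⱼ₋₁, πⱼ]) ε(f|_{[0,πⱼ)})` is `A_π ε(f)` for the operator
`A_π = ∑ⱼ S((πⱼ₋₁, πⱼ]) E_{πⱼ}`, where `E_r = projE r` is the second quantisation of the cut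
at `r`. Adaptedness of `S` makes `S((πⱼ₋₁, πⱼ])` commute with `E_{πⱼ}`, so `A_π` is a sum of
mutually orthogonal projections, and it decreases when `π` is refined. A decreasing net of
projections converges strongly to the projection onto the intersection of their ranges: this is
`E_{S,t}`. Since `S([0,s]) A_π` is the operator of the restriction of `π` to `[0,s]`, one gets
`S([0,s]) E_{S,t} = E_{S,s}` for `s ≤ t`, and the product rules follow from idempotence and
self-adjointness. -/

namespace Submodule

variable {𝕜 V ι : Type*} [RCLike 𝕜] [NormedAddCommGroup V] [InnerProductSpace 𝕜 V]
  (U : ι → Submodule 𝕜 V) [∀ i, (U i).HasOrthogonalProjection]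

lemma iInf_eq_orthogonal_iSup_orthogonal : ⨅ i, U i = (⨆ i, (U i)ᗮ)ᗮ := by
  simp_rw [← iInf_orthogonal, orthogonal_orthogonal]

variable [CompleteSpace V]

instance hasOrthogonalProjection_iInf : (⨅ i, U i).HasOrthogonalProjection := by
  rw [iInf_eq_orthogonal_iSup_orthogonal]
  infer_instance

theorem starProjection_tendsto_iInf [Preorder ι] (hU : Antitone U) (x : V) :
    Tendsto (fun i => (U i).starProjection x) atTop (𝓝 ((⨅ i, U i).starProjection x)) := by
  have hcl : (⨆ i, (U i)ᗮ).topologicalClosure = (⨅ i, U i)ᗮ := by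
    rw [← orthogonal_orthogonal_eq_closure, iInf_eq_orthogonal_iSup_orthogonal]
  have := starProjection_tendsto_closure_iSup (fun i => (U i)ᗮ)
    (fun i j hij => orthogonal_le (hU hij)) x
  simp only [hcl, starProjection_orthogonal'] at this
  simpa using this.const_sub x

end Submodule

namespace StopPartition

variable {t : ℝ≥0∞}

instance : Nonempty (StopPartition t) :=
  ⟨⟨{0, t}, by simp, by simp, by simp⟩⟩

instance : IsDirectedOrder (StopPartition t) :=
  ⟨fun π π' => ⟨⟨π.pts ∪ π'.pts, Finset.mem_union_left _ π.zero_mem,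
    Finset.mem_union_left _ π.top_mem, by simpa [or_imp, forall_and] using ⟨π.mem_le, π'.mem_le⟩⟩,
    Finset.subset_union_left, Finset.subset_union_right⟩⟩

variable {π π' : StopPartition t} {r s u : ℝ≥0∞}

lemma pred_lt (hs : 0 < s) : π.pred s < s :=
  (Finset.sup_lt_iff hs).2 fun _ hu => (Finset.mem_filter.1 hu).2

lemma pred_mem (hs : 0 < s) : π.pred s ∈ π.pts := by
  obtain ⟨u, hu, h⟩ := Finset.exists_mem_eq_sup (π.pts.filter (· < s))
    ⟨0, Finset.mem_filter.2 ⟨π.zero_mem, hs⟩⟩ id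
  rw [pred, h]
  exact (Finset.mem_filter.1 hu).1

lemma le_pred (hu : u ∈ π.pts) (hus : u < s) : u ≤ π.pred s :=
  Finset.le_sup (f := id) (Finset.mem_filter.2 ⟨hu, hus⟩)

lemma disjoint_Ioc_pred (hr : r ∈ π.pts) (hs : s ∈ π.pts) (hrs : r ≠ s) :
    Disjoint (Set.Ioc (π.pred r) r) (Set.Ioc (π.pred s) s) := by
  rcases hrs.lt_or_gt with h | h
  · exact Set.Ioc_disjoint_Ioc_of_le (le_pred hr h)
  · exact (Set.Ioc_disjoint_Ioc_of_le (le_pred hs h)).symm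

lemma exists_Ioc_pred_subset (hle : π ≤ π') (hr : r ∈ π'.pts.erase 0) :
    ∃ s ∈ π.pts.erase 0, r ≤ s ∧ Set.Ioc (π'.pred r) r ⊆ Set.Ioc (π.pred s) s := by
  obtain ⟨hr0, hr⟩ := Finset.mem_erase.1 hr
  obtain ⟨s, hs, hs_min⟩ := (π.pts.filter (r ≤ ·)).exists_min_image id
    ⟨t, Finset.mem_filter.2 ⟨π.top_mem, π'.mem_le r hr⟩⟩
  obtain ⟨hs, hrs⟩ := Finset.mem_filter.1 hs
  have hs0 : 0 < s := (pos_iff_ne_zero.2 hr0).trans_le hrs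
  have hpred : π.pred s < r := not_le.1 fun h =>
    (pred_lt hs0).not_ge (hs_min _ (Finset.mem_filter.2 ⟨pred_mem hs0, h⟩))
  refine ⟨s, Finset.mem_erase.2 ⟨hs0.ne', hs⟩, hrs, Set.Ioc_subset_Ioc ?_ hrs⟩
  exact le_pred (hle (pred_mem hs0)) hpred

def restrict (π : StopPartition t) (s : ℝ≥0∞) : StopPartition s where
  pts := insert s (π.pts.filter (· ≤ s))
  zero_mem := Finset.mem_insert_of_mem (Finset.mem_filter.2 ⟨π.zero_mem, zero_le⟩)
  top_mem := Finset.mem_insert_self _ _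
  mem_le := by simp +contextual

lemma restrict_pts_erase (hs : s ∈ π.pts) :
    (π.restrict s).pts.erase 0 = (π.pts.erase 0).filter (· ≤ s) := by
  have hs' : s ∈ π.pts.filter (· ≤ s) := Finset.mem_filter.2 ⟨hs, le_rfl⟩
  change (insert s (π.pts.filter (· ≤ s))).erase 0 = _
  rw [Finset.insert_eq_of_mem hs', Finset.filter_erase]

lemma restrict_pred (hrs : r ≤ s) : (π.restrict s).pred r = π.pred r := by
  simp only [pred, restrict, Finset.filter_insert, not_lt.2 hrs, if_false, Finset.filter_filter]
  congr 1
  exact Finset.filter_congr fun u _ => and_iff_right_of_imp fun hu => (hu.trans_le hrs).le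

lemma tendsto_restrict (hst : s ≤ t) :
    Tendsto (fun π : StopPartition t => π.restrict s) atTop atTop := by
  refine tendsto_atTop_atTop.2 fun ρ => ⟨⟨insert t ρ.pts, Finset.mem_insert_of_mem ρ.zero_mem,
    Finset.mem_insert_self _ _, ?_⟩, fun π hπ u hu => ?_⟩
  · simpa [forall_and] using fun u hu => (ρ.mem_le u hu).trans hst
  · exact Finset.mem_insert_of_mem
      (Finset.mem_filter.2 ⟨hπ (Finset.mem_insert_of_mem hu), ρ.mem_le u hu⟩)

def insertPt (π : StopPartition t) (s : ℝ≥0∞) (hs : s ≤ t) : StopPartition t where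
  pts := insert s π.pts
  zero_mem := Finset.mem_insert_of_mem π.zero_mem
  top_mem := Finset.mem_insert_of_mem π.top_mem
  mem_le := by simpa [forall_and] using ⟨hs, π.mem_le⟩

lemma mem_insertPt (hs : s ≤ t) : s ∈ (π.insertPt s hs).pts :=
  Finset.mem_insert_self _ _

lemma tendsto_insertPt (hs : s ≤ t) :
    Tendsto (fun π : StopPartition t => π.insertPt s hs) atTop atTop :=
  tendsto_atTop_atTop.2 fun ρ => ⟨ρ, fun _ hπ => hπ.trans (Finset.subset_insert _ _)⟩

end StopPartition

namespace FockSpec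

variable (E) {a b u : ℝ≥0∞}

lemma cut_cut_of_le (hab : a ≤ b) (f : H) : E.cut a (E.cut b f) = E.cut a f := by
  rw [E.cut_min, min_eq_left hab]

lemma eq_of_forall_inner_eV {x y : 𝓕} (h : ∀ f, ⟪E.eV f, x⟫ = ⟪E.eV f, y⟫) : x = y := by
  have hzero : innerSL ℂ (x - y) = 0 := ContinuousLinearMap.ext_on E.dense_eV <| by
    rintro _ ⟨f, rfl⟩
    rw [innerSL_apply_apply, zero_apply, inner_sub_left, sub_eq_zero,
      ← inner_conj_symm, h f, inner_conj_symm]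
  have := congr($hzero (x - y))
  rwa [innerSL_apply_apply, zero_apply, inner_self_eq_zero, sub_eq_zero] at this

lemma ext_inner_eV {T U : 𝓕 →L[ℂ] 𝓕}
    (h : ∀ f g, ⟪E.eV f, T (E.eV g)⟫ = ⟪E.eV f, U (E.eV g)⟫) : T = U :=
  ContinuousLinearMap.ext_on E.dense_eV <| by
    rintro _ ⟨g, rfl⟩
    exact E.eq_of_forall_inner_eV fun f => h f g

lemma isSelfAdjoint_of_inner_eV {T : 𝓕 →L[ℂ] 𝓕}
    (h : ∀ f g, ⟪T (E.eV f), E.eV g⟫ = ⟪E.eV f, T (E.eV g)⟫) : IsSelfAdjoint T :=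
  ContinuousLinearMap.isSelfAdjoint_iff'.2 <| E.ext_inner_eV fun f g => by
    rw [ContinuousLinearMap.adjoint_inner_right, h]

lemma projE_mul_projE (a b : ℝ≥0∞) : E.projE a * E.projE b = E.projE (min a b) :=
  ContinuousLinearMap.ext_on E.dense_eV <| by
    rintro _ ⟨f, rfl⟩
    simp [E.projE_eV, E.cut_min]

lemma isStarProjection_projE (t : ℝ≥0∞) : IsStarProjection (E.projE t) where
  isIdempotentElem := by rw [IsIdempotentElem, projE_mul_projE, min_self]
  isSelfAdjoint := E.isSelfAdjoint_of_inner_eV fun f g => by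
    rw [E.projE_eV, E.projE_eV, E.inner_eV, E.inner_eV, E.cut_sa]

lemma past_eV_zero (f : H) (s : ℝ≥0∞) : E.past f s (E.eV 0) = E.projE s (E.eV f) := by
  simp [E.past_eV, E.projE_eV]

variable {E}

lemma AdaptedAt.commute_projE {X : 𝓕 →L[ℂ] 𝓕} (hX : E.AdaptedAt X u) (hub : u ≤ b) :
    Commute X (E.projE b) := by
  refine E.ext_inner_eV fun f g => ?_
  have hP : ⟪E.projE b (E.eV f), X (E.eV g)⟫ = ⟪E.eV f, E.projE b (X (E.eV g))⟫ :=
    (E.isStarProjection_projE b).isSelfAdjoint.isSymmetric _ _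
  rw [mul_apply_eq_comp, mul_apply_eq_comp, ← hP, E.projE_eV, E.projE_eV, hX, hX (E.cut b f),
    E.cut_cut_of_le hub, E.cut_cut_of_le hub]
  congr 2
  simp only [inner_sub_left, inner_sub_right, E.cut_sa, E.cut_min, min_eq_left hub,
    min_eq_right hub, min_self]

end FockSpec

namespace QST

variable (S : QST E) {A B : Set ℝ≥0∞} {a b c s t : ℝ≥0∞}

lemma isStarProjection_meas (A : Set ℝ≥0∞) : IsStarProjection (S.meas A) :=
  ⟨S.idem A, S.sa A⟩

lemma meas_union (hA : MeasurableSet A) (hB : MeasurableSet B) (hAB : Disjoint A B) :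
    S.meas (A ∪ B) = S.meas A + S.meas B := by
  refine ContinuousLinearMap.ext fun y => ext_inner_left ℂ fun x => ?_
  have h := (S.cm x y).of_union hAB hA hB
  rwa [S.cm_apply x y _ hA, S.cm_apply x y _ hB, S.cm_apply x y _ (hA.union hB),
    ← inner_add_right] at h

lemma meas_mul_meas_of_disjoint (hA : MeasurableSet A) (hB : MeasurableSet B)
    (hAB : Disjoint A B) : S.meas A * S.meas B = 0 := by
  have : IsAddTorsionFree (𝓕 →L[ℂ] 𝓕) := .of_isTorsionFree ℂ _
  have hidem : IsIdempotentElem (S.meas A + S.meas B) := by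
    rw [← S.meas_union hA hB hAB]
    exact S.idem _
  have hA' := (S.isStarProjection_meas A).isIdempotentElem
  exact hA'.mul_eq_zero_of_anticommute ((hA'.add_iff (S.isStarProjection_meas B).1).1 hidem)

lemma meas_mul_meas_of_subset (hA : MeasurableSet A) (hB : MeasurableSet B) (hAB : A ⊆ B) :
    S.meas B * S.meas A = S.meas A := by
  rw [← Set.union_sdiff_cancel hAB, S.meas_union hA (hB.diff hA) Set.disjoint_sdiff_right,
    add_mul, (S.isStarProjection_meas A).isIdempotentElem.eq,
    S.meas_mul_meas_of_disjoint (hB.diff hA) hA Set.disjoint_sdiff_left, add_zero]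

lemma commute_meas_Iic_projE (hab : a ≤ b) : Commute (S.meas (Set.Iic a)) (E.projE b) := by
  by_cases ha : a = ⊤
  · rw [ha, Set.Iic_top, S.total]
    exact Commute.one_left _
  · exact (S.adapted a ha).commute_projE hab

lemma commute_meas_Ioc_projE (hab : a ≤ b) (hbc : b ≤ c) :
    Commute (S.meas (Set.Ioc a b)) (E.projE c) := by
  have hsplit := S.meas_union (A := Set.Iic a) (B := Set.Ioc a b) measurableSet_Iic
    measurableSet_Ioc (Set.Iic_disjoint_Ioc le_rfl)
  rw [Set.Iic_union_Ioc_eq_Iic hab] at hsplit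
  rw [eq_sub_of_add_eq' hsplit.symm]
  exact (S.commute_meas_Iic_projE hbc).sub_left (S.commute_meas_Iic_projE (hab.trans hbc))

def riemannOp (π : StopPartition t) : 𝓕 →L[ℂ] 𝓕 :=
  ∑ r ∈ π.pts.erase 0, S.meas (Set.Ioc (π.pred r) r) * E.projE r

variable {π π' : StopPartition t} {r : ℝ≥0∞}

lemma sum_past_eV_zero (f : H) (π : StopPartition t) :
    S.sum (fun s => E.past f s (E.eV 0)) π = S.riemannOp π (E.eV f) := by
  simp [QST.sum, riemannOp, E.past_eV_zero]

lemma commute_meas_Ioc_pred_projE (hr : r ∈ π.pts.erase 0) (hrb : r ≤ b) :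
    Commute (S.meas (Set.Ioc (π.pred r) r)) (E.projE b) :=
  S.commute_meas_Ioc_projE
    (StopPartition.pred_lt (pos_iff_ne_zero.2 (Finset.ne_of_mem_erase hr))).le hrb

lemma riemannOp_mul_meas_of_subset (hr : r ∈ π.pts.erase 0) (hA : MeasurableSet A)
    (hAr : A ⊆ Set.Ioc (π.pred r) r) : S.riemannOp π * S.meas A = E.projE r * S.meas A := by
  rw [riemannOp, Finset.sum_mul, Finset.sum_eq_single_of_mem r hr]
  · rw [(S.commute_meas_Ioc_pred_projE hr le_rfl).eq, mul_assoc,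
      S.meas_mul_meas_of_subset hA measurableSet_Ioc hAr]
  · intro r' hr' hne
    rw [(S.commute_meas_Ioc_pred_projE hr' le_rfl).eq, mul_assoc,
      S.meas_mul_meas_of_disjoint measurableSet_Ioc hA
        ((StopPartition.disjoint_Ioc_pred (Finset.mem_of_mem_erase hr')
          (Finset.mem_of_mem_erase hr) hne).mono_right hAr), mul_zero]

lemma riemannOp_mul_of_le (hle : π ≤ π') : S.riemannOp π * S.riemannOp π' = S.riemannOp π' := by
  rw [riemannOp.eq_1 S π', Finset.mul_sum]
  refine Finset.sum_congr rfl fun r' hr' => ?_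
  obtain ⟨r, hr, hr'r, hsub⟩ := StopPartition.exists_Ioc_pred_subset hle hr'
  rw [← mul_assoc, S.riemannOp_mul_meas_of_subset hr measurableSet_Ioc hsub,
    ← (S.commute_meas_Ioc_pred_projE hr' hr'r).eq, mul_assoc, E.projE_mul_projE,
    min_eq_right hr'r]

lemma isStarProjection_riemannOp (π : StopPartition t) : IsStarProjection (S.riemannOp π) where
  isIdempotentElem := S.riemannOp_mul_of_le le_rfl
  isSelfAdjoint := isSelfAdjoint_sum _ fun r hr =>
    ((S.isStarProjection_meas _).mul (E.isStarProjection_projE r)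
      (S.commute_meas_Ioc_pred_projE hr le_rfl)).isSelfAdjoint

lemma meas_Iic_mul_riemannOp (hs : s ∈ π.pts) :
    S.meas (Set.Iic s) * S.riemannOp π = S.riemannOp (π.restrict s) := by
  rw [riemannOp, riemannOp, Finset.mul_sum, StopPartition.restrict_pts_erase hs, Finset.sum_filter]
  refine Finset.sum_congr rfl fun r _ => ?_
  split_ifs with hrs
  · rw [← mul_assoc, S.meas_mul_meas_of_subset measurableSet_Ioc measurableSet_Iic
      (Set.Ioc_subset_Iic_self.trans (Set.Iic_subset_Iic.2 hrs)), StopPartition.restrict_pred hrs]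
  · have hdisj : Disjoint (Set.Iic s) (Set.Ioc (π.pred r) r) :=
      Set.Iic_disjoint_Ioc (StopPartition.le_pred hs (not_le.1 hrs))
    rw [← mul_assoc, S.meas_mul_meas_of_disjoint measurableSet_Iic measurableSet_Ioc hdisj,
      zero_mul]

instance (π : StopPartition t) : (S.riemannOp π).range.HasOrthogonalProjection :=
  (isStarProjection_iff_eq_starProjection_range.1 (S.isStarProjection_riemannOp π)).1

def timeSubspace (t : ℝ≥0∞) : Submodule ℂ 𝓕 :=
  ⨅ π : StopPartition t, (S.riemannOp π).range

instance (t : ℝ≥0∞) : (S.timeSubspace t).HasOrthogonalProjection :=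
  Submodule.hasOrthogonalProjection_iInf _

def timeProj (t : ℝ≥0∞) : 𝓕 →L[ℂ] 𝓕 :=
  (S.timeSubspace t).starProjection

lemma tendsto_riemannOp (t : ℝ≥0∞) (x : 𝓕) :
    Tendsto (fun π : StopPartition t => S.riemannOp π x) atTop (𝓝 (S.timeProj t x)) := by
  have hproj (π : StopPartition t) : S.riemannOp π = (S.riemannOp π).range.starProjection :=
    (isStarProjection_iff_eq_starProjection_range.1 (S.isStarProjection_riemannOp π)).2
  have hanti : Antitone fun π : StopPartition t => (S.riemannOp π).range := fun π π' hle => by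
    dsimp only
    rw [← S.riemannOp_mul_of_le hle]
    exact LinearMap.range_comp_le_range _ _
  exact (Submodule.starProjection_tendsto_iInf _ hanti x).congr fun π => congr($(hproj π) x).symm

lemma isStarProjection_timeProj (t : ℝ≥0∞) : IsStarProjection (S.timeProj t) :=
  isStarProjection_starProjection

lemma meas_Iic_mul_timeProj (hst : s ≤ t) : S.meas (Set.Iic s) * S.timeProj t = S.timeProj s := by
  ext x
  have hlim := ((S.meas (Set.Iic s)).continuous.tendsto _).comp
    ((S.tendsto_riemannOp t x).comp (StopPartition.tendsto_insertPt hst))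
  refine tendsto_nhds_unique (hlim.congr fun π => ?_) ((S.tendsto_riemannOp s x).comp
    ((StopPartition.tendsto_restrict hst).comp (StopPartition.tendsto_insertPt hst)))
  exact congr($(S.meas_Iic_mul_riemannOp (StopPartition.mem_insertPt hst)) x)

lemma timeProj_mul_timeProj_of_le (hst : s ≤ t) : S.timeProj s * S.timeProj t = S.timeProj s := by
  rw [← S.meas_Iic_mul_timeProj hst, mul_assoc, (S.isStarProjection_timeProj t).isIdempotentElem.eq]

lemma timeProj_mul_timeProj (s t : ℝ≥0∞) :
    S.timeProj s * S.timeProj t = S.timeProj (min s t) := by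
  rcases le_total s t with hst | hts
  · rw [min_eq_left hst, S.timeProj_mul_timeProj_of_le hst]
  · have hs := (S.isStarProjection_timeProj s).isSelfAdjoint
    have ht := (S.isStarProjection_timeProj t).isSelfAdjoint
    rw [min_eq_right hts, ← hs.star_eq, ← ht.star_eq, ← star_mul,
      S.timeProj_mul_timeProj_of_le hts, ht.star_eq]

end QST

theorem time_projections_exist_general
    (E : FockSpec H 𝓕) (S : QST E) :
    ∃ ESt : ℝ≥0∞ → 𝓕 →L[ℂ] 𝓕,
      (∀ t : ℝ≥0∞, 0 < t →
        IsSelfAdjoint (ESt t) ∧ ESt t ∘L ESt t = ESt t ∧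
          ∀ f : H,
            Tendsto (fun π : StopPartition t => S.sum (fun s => E.past f s (E.eV 0)) π) atTop
              (𝓝 (ESt t (E.eV f)))) ∧
      (∀ s t : ℝ≥0∞, 0 < s → 0 < t →
        ESt s ∘L ESt t = ESt (min s t) ∧ ESt t ∘L ESt s = ESt (min s t)) ∧
      (∀ s : ℝ≥0∞, 0 < s → S.meas {u | u ≤ s} ∘L ESt ⊤ = ESt s) := by
  refine ⟨S.timeProj, fun t _ => ?_, fun s t _ _ => ?_, fun s _ => S.meas_Iic_mul_timeProj le_top⟩
  · refine ⟨(S.isStarProjection_timeProj t).isSelfAdjoint,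
      (S.isStarProjection_timeProj t).isIdempotentElem, fun f => ?_⟩
    simp_rw [S.sum_past_eV_zero]
    exact S.tendsto_riemannOp t (E.eV f)
  · exact ⟨S.timeProj_mul_timeProj s t, min_comm s t ▸ S.timeProj_mul_timeProj t s⟩

/-- Theorem `expS`: the time projections `E_{S,t}`, `t ∈ (0, ∞]`,
with `E_{S,t} ε(f) = ∫_{[0,t]} S(ds) ε(f|_{[0,s)}) ⊗ ε(0|_{[s,∞)})`, satisfying
`E_{S,s} E_{S,t} = E_{S,s∧t} = E_{S,t} E_{S,s}` and `S([0,s]) E_{S,∞} = E_{S,s}`. -/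
theorem time_projections_exist
    (E : FockSpec H 𝓕) (S : QST E) (hS : S.Finite) :
    ∃ ESt : ℝ≥0∞ → 𝓕 →L[ℂ] 𝓕,
      (∀ t : ℝ≥0∞, 0 < t →
        IsSelfAdjoint (ESt t) ∧ ESt t ∘L ESt t = ESt t ∧
          ∀ f : H,
            Tendsto (fun π : StopPartition t => S.sum (fun s => E.past f s (E.eV 0)) π) atTop
              (𝓝 (ESt t (E.eV f)))) ∧
      (∀ s t : ℝ≥0∞, 0 < s → 0 < t →
        ESt s ∘L ESt t = ESt (min s t) ∧ ESt t ∘L ESt s = ESt (min s t)) ∧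
      (∀ s : ℝ≥0∞, 0 < s → S.meas {u | u ≤ s} ∘L ESt ⊤ = ESt s) :=
  time_projections_exist_general E S

end
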